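/- arXiv:2211.05732 — 7 statements merged into one kernel-verified Lean document; each statement's English description precedes it below -/
import Mathlib

section
/- Let u(f) = Σ_o p(o|a*(f))·(v_o − f_o) be the principal's utility under the agent's best response. If γ = α(v − f) + r for some α ∈ (0,1], then u(f) − u(f+γ) ≤ 2(‖γ‖_∞ + ‖r‖_∞/α). -/
/-- Continuity of the utility function, ℓ∞ version:
if γ = α(v − f) + r with α ∈ (0,1], then u(f) − u(f+γ) ≤ 2(‖γ‖_∞ + ‖r‖_∞/α). -/
theorem utility_continuity_sup_norm
    {m : ℕ} {A : Type*} [Nonempty A]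
    (p : A → Fin m → ℝ) (c : A → ℝ) (astar : (Fin m → ℝ) → A)
    (hp : ∀ a o, 0 ≤ p a o) (hp1 : ∀ a, ∑ o, p a o = 1)
    (hbr : ∀ (f : Fin m → ℝ) (a : A),
      ∑ o, p a o * f o - c a ≤ ∑ o, p (astar f) o * f o - c (astar f))
    (v : Fin m → ℝ) (hv : ∀ o, v o ∈ Set.Icc (0:ℝ) 1)
    (u : (Fin m → ℝ) → ℝ)
    (hu : ∀ f, u f = ∑ o, p (astar f) o * (v o - f o))
    (f γ r : Fin m → ℝ) (α : ℝ) (hα0 : 0 < α) (hα1 : α ≤ 1)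
    (hγ : γ = α • (v - f) + r)
    (hf : ∀ o, f o ∈ Set.Icc (0:ℝ) 1)
    (hfγ : ∀ o, f o + γ o ∈ Set.Icc (0:ℝ) 1) :
    u f - u (f + γ) ≤ 2 * (‖γ‖ + ‖r‖ / α) := by
  classical
  set a := astar f with ha
  set b := astar (f + γ) with hb
  set S : A → (Fin m → ℝ) → ℝ := fun a x => ∑ o, p a o * x o with hS
  -- basic bound on S
  have hSle : ∀ (a : A) (x : Fin m → ℝ), S a x ≤ ‖x‖ := by
    intro a x
    calc S a x ≤ ∑ o, p a o * ‖x‖ := by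
          apply Finset.sum_le_sum
          intro o _
          exact mul_le_mul_of_nonneg_left
            (le_trans (le_abs_self _) (norm_le_pi_norm x o)) (hp a o)
      _ = ‖x‖ := by rw [← Finset.sum_mul, hp1, one_mul]
  have hSge : ∀ (a : A) (x : Fin m → ℝ), -‖x‖ ≤ S a x := by
    intro a x
    have := hSle a (-x)
    have hneg : S a (-x) = -S a x := by
      simp [hS, Finset.sum_neg_distrib]
    rw [hneg, norm_neg] at this
    linarith
  -- linearity facts
  have hSadd : ∀ (a : A) (x y : Fin m → ℝ), S a (x + y) = S a x + S a y := by
    intro a x y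
    simp [hS, mul_add, Finset.sum_add_distrib]
  have hSsmul : ∀ (a : A) (t : ℝ) (x : Fin m → ℝ), S a (t • x) = t * S a x := by
    intro a t x
    simp only [hS, Pi.smul_apply, smul_eq_mul, Finset.mul_sum]
    exact Finset.sum_congr rfl (fun o _ => by ring)
  -- incentive compatibility
  have h1 : S a (f + γ) - c a ≤ S b (f + γ) - c b := hbr (f + γ) a
  have h2 : S b f - c b ≤ S a f - c a := hbr f b
  have hkey : S a γ ≤ S b γ := by
    rw [hSadd, hSadd] at h1; linarith
  -- decompose γ
  have hdec : ∀ (x : A), S x γ = α * S x (v - f) + S x r := by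
    intro x; rw [hγ, hSadd, hSsmul]
  have hdiff : S a (v - f) - S b (v - f) ≤ 2 * ‖r‖ / α := by
    have h3 : α * S a (v - f) + S a r ≤ α * S b (v - f) + S b r := by
      rw [← hdec, ← hdec]; exact hkey
    have h4 : S a r ≥ -‖r‖ := hSge a r
    have h5 : S b r ≤ ‖r‖ := hSle b r
    have h6 : α * (S a (v - f) - S b (v - f)) ≤ 2 * ‖r‖ := by linarith
    rw [le_div_iff₀ hα0]; linarith
  -- rewrite u
  have huf : u f = S a (v - f) := by rw [hu]; simp [hS]; rfl
  have hufγ : u (f + γ) = S b (v - f) - S b γ := by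
    rw [hu, ← hb]
    have : ∀ o, p b o * (v o - (f + γ) o)
        = p b o * ((v - f) o) - p b o * γ o := by
      intro o; simp [Pi.add_apply, Pi.sub_apply]; ring
    simp only [this, Finset.sum_sub_distrib]; rfl
  have hγle : S b γ ≤ ‖γ‖ := hSle b γ
  have hγ0 : (0:ℝ) ≤ ‖γ‖ := norm_nonneg _
  have hr0 : (0:ℝ) ≤ ‖r‖ / α := div_nonneg (norm_nonneg _) hα0.le
  rw [huf, hufγ]
  have : 2 * ‖r‖ / α = 2 * (‖r‖ / α) := by ring
  linarith [hdiff, this ▸ hdiff]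
end

section
/- In the linear contract setting, the map α ↦ u(α)/(1−α) is non-decreasing on [0,1): for any 0 ≤ α < α' < 1, u(α)/(1−α) ≤ u(α')/(1−α'). -/
/-! Adding the best-response inequalities of the agent at `α` (against `astar α'`) and at `α'`
(against `astar α`) cancels the costs and leaves `(α' - α) * (V (astar α') - V (astar α)) ≥ 0`:
the expected value of the induced action is non-decreasing in `α`. Since
`u α / (1 - α) = V (astar α)` for `α < 1`, the theorem follows. -/

theorem monotone_value_comp_bestResponse {A : Type*} (V c : A → ℝ) (astar : ℝ → A)
    (hbr : ∀ (α : ℝ) (a : A), α * V a - c a ≤ α * V (astar α) - c (astar α)) :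
    Monotone (V ∘ astar) := by
  intro α α' hαα'
  obtain hlt | rfl := hαα'.lt_or_eq
  · have hsum : 0 ≤ (α' - α) * (V (astar α') - V (astar α)) := by
      linarith [hbr α (astar α'), hbr α' (astar α)]
    exact sub_nonneg.mp (nonneg_of_mul_nonneg_right hsum (sub_pos.mpr hlt))
  · exact le_rfl

theorem linear_contract_normalized_utility_monotone_general
    {A : Type*}
    (V c : A → ℝ) (astar : ℝ → A)
    (hbr : ∀ (α : ℝ) (a : A), α * V a - c a ≤ α * V (astar α) - c (astar α))
    (u : ℝ → ℝ) (hu : ∀ α, u α = (1 - α) * V (astar α))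
    (α α' : ℝ) (h1 : α < α') (h2 : α' < 1) :
    u α / (1 - α) ≤ u α' / (1 - α') := by
  rw [hu, hu, mul_div_cancel_left₀ _ (by linarith), mul_div_cancel_left₀ _ (by linarith)]
  exact monotone_value_comp_bestResponse V c astar hbr h1.le

/-- In the linear contract setting, α ↦ u(α)/(1−α) is non-decreasing on [0,1):
for 0 ≤ α < α' < 1, u(α)/(1−α) ≤ u(α')/(1−α').
Here `V a = E_{X∼p(·|a)}[v(X)] ∈ [0,1]`, `c a ≥ 0` is the cost, `astar α` is the agent's
best response and `u α = (1−α)·V (astar α)`. -/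
theorem linear_contract_normalized_utility_monotone
    {A : Type*} [Nonempty A]
    (V c : A → ℝ) (astar : ℝ → A)
    (hV : ∀ a, V a ∈ Set.Icc (0:ℝ) 1) (hc : ∀ a, 0 ≤ c a)
    (hbr : ∀ (α : ℝ) (a : A), α * V a - c a ≤ α * V (astar α) - c (astar α))
    (u : ℝ → ℝ) (hu : ∀ α, u α = (1 - α) * V (astar α))
    (α α' : ℝ) (h0 : 0 ≤ α) (h1 : α < α') (h2 : α' < 1) :
    u α / (1 - α) ≤ u α' / (1 - α') :=
  linear_contract_normalized_utility_monotone_general V c astar hbr u hu α α' h1 h2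
end

section
/- In the linear contract setting, the utility function is one-sided Lipschitz to the right: for any α ≥ 0 and ε ≥ 0 with α + ε ≤ 1, u(α) − u(α+ε) ≤ ε. -/
/-!
Revealed preference: adding the optimality inequalities of the best responses at `α < β`
gives `(β - α) V(a*(α)) ≤ (β - α) V(a*(β))`, so the value of the best response is monotone in
the share.  Hence `u α - u (α + ε) ≤ (1 - α) V(a*(α + ε)) - (1 - α - ε) V(a*(α + ε)) = ε V(a*(α + ε))`,
which is at most `ε` because values are at most `1`.
-/

theorem le_of_revealed_preference {R A : Type*} [CommRing R] [LinearOrder R] [IsStrictOrderedRing R]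
    (V c : A → R) {α β : R} {a b : A} (hαβ : α < β)
    (ha : α * V b - c b ≤ α * V a - c a) (hb : β * V a - c a ≤ β * V b - c b) :
    V a ≤ V b := by
  have h : (β - α) * V a ≤ (β - α) * V b := by linarith
  exact le_of_mul_le_mul_left h (sub_pos.mpr hαβ)

theorem monotone_value_bestResponse {R A : Type*} [CommRing R] [LinearOrder R]
    [IsStrictOrderedRing R] (V c : A → R) (astar : R → A)
    (hbr : ∀ (α : R) (a : A), α * V a - c a ≤ α * V (astar α) - c (astar α)) :
    Monotone fun α => V (astar α) := by
  intro α β hαβ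
  rcases hαβ.eq_or_lt with rfl | hlt
  · exact le_rfl
  · exact le_of_revealed_preference V c hlt (hbr α _) (hbr β _)

theorem linear_contract_one_sided_lipschitz_general
    {A : Type*}
    (V c : A → ℝ) (astar : ℝ → A)
    (hV : ∀ a, V a ∈ Set.Icc (0:ℝ) 1)
    (hbr : ∀ (α : ℝ) (a : A), α * V a - c a ≤ α * V (astar α) - c (astar α))
    (u : ℝ → ℝ) (hu : ∀ α, u α = (1 - α) * V (astar α))
    (α ε : ℝ) (hε : 0 ≤ ε) (h1 : α + ε ≤ 1) :
    u α - u (α + ε) ≤ ε := by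
  have hmono : V (astar α) ≤ V (astar (α + ε)) :=
    monotone_value_bestResponse V c astar hbr (le_add_of_nonneg_right hε)
  have hshare : (1 - α) * V (astar α) ≤ (1 - α) * V (astar (α + ε)) :=
    mul_le_mul_of_nonneg_left hmono (by linarith)
  have hvalue : ε * V (astar (α + ε)) ≤ ε := mul_le_of_le_one_right hε (hV _).2
  rw [hu, hu]
  linarith

/-- In the linear contract setting, the utility function is one-sided
Lipschitz to the right: for α ≥ 0, ε ≥ 0 with α + ε ≤ 1, u(α) − u(α+ε) ≤ ε. -/
theorem linear_contract_one_sided_lipschitz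
    {A : Type*} [Nonempty A]
    (V c : A → ℝ) (astar : ℝ → A)
    (hV : ∀ a, V a ∈ Set.Icc (0:ℝ) 1) (hc : ∀ a, 0 ≤ c a)
    (hbr : ∀ (α : ℝ) (a : A), α * V a - c a ≤ α * V (astar α) - c (astar α))
    (u : ℝ → ℝ) (hu : ∀ α, u α = (1 - α) * V (astar α))
    (α ε : ℝ) (h0 : 0 ≤ α) (hε : 0 ≤ ε) (h1 : α + ε ≤ 1) :
    u α - u (α + ε) ≤ ε :=
  linear_contract_one_sided_lipschitz_general V c astar hV hbr u hu α ε hε h1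
end

section
/- In the linear contract setting, the discretization error under uniform discretization {0, ε, 2ε, ..., 1} is at most ε: max_{α∈[0,1]} u(α) − max_{α∈{0,ε,...,1}} u(α) ≤ ε. -/
/-!
Against linear contracts the agent's best response moves up in the principal's value
`V` as the share `α` grows (monotone comparative statics: adding the two best-response
inequalities gives `(β - α) (V (a* β) - V (a* α)) ≥ 0`). Hence raising the share from `α`
to `β` costs the principal at most the extra share `β - α` of a value bounded by `1`, so
`u α - u β ≤ β - α`. Rounding any `α ∈ [0, 1]` up to the next grid point therefore loses
at most `ε`.
-/

open Set

theorem monotone_bestResponse_value {A : Type*} (V c : A → ℝ) (astar : ℝ → A)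
    (hbr : ∀ (α : ℝ) (a : A), α * V a - c a ≤ α * V (astar α) - c (astar α)) :
    Monotone fun α => V (astar α) := by
  intro α β hαβ
  rcases hαβ.eq_or_lt with rfl | hlt
  · rfl
  · have hα := hbr α (astar β)
    have hβ := hbr β (astar α)
    nlinarith

theorem sub_le_of_monotone_of_le_one {w u : ℝ → ℝ} (hw : Monotone w) (hw1 : ∀ α, w α ≤ 1)
    (hu : ∀ α, u α = (1 - α) * w α) {α β : ℝ} (hαβ : α ≤ β) (hα1 : α ≤ 1) :
    u α - u β ≤ β - α := by
  have hwαβ := hw hαβ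
  have hwβ := hw1 β
  rw [hu, hu]
  nlinarith

theorem exists_grid_point_mem_Icc {ε : ℝ} (hε : 0 < ε) {n : ℕ} (hnε : (n : ℝ) * ε = 1)
    {α : ℝ} (hα : α ∈ Icc (0 : ℝ) 1) :
    ∃ k : ℕ, k ≤ n ∧ α ≤ k * ε ∧ (k : ℝ) * ε ≤ α + ε := by
  refine ⟨⌈α / ε⌉₊, ?_, ?_, ?_⟩
  · rw [Nat.ceil_le, div_le_iff₀ hε, hnε]
    exact hα.2
  · rw [← div_le_iff₀ hε]
    exact Nat.le_ceil _
  · have hceil := Nat.ceil_lt_add_one (div_nonneg hα.1 hε.le)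
    calc (⌈α / ε⌉₊ : ℝ) * ε ≤ (α / ε + 1) * ε := by gcongr
      _ = α + ε := by field_simp

theorem csSup_image_le_csSup_image_add {f : ℝ → ℝ} {s t : Set ℝ} {ε : ℝ}
    (hs : s.Nonempty) (ht : BddAbove (f '' t)) (h : ∀ x ∈ s, ∃ y ∈ t, f x ≤ f y + ε) :
    sSup (f '' s) ≤ sSup (f '' t) + ε := by
  refine csSup_le (hs.image f) ?_
  rintro _ ⟨x, hx, rfl⟩
  obtain ⟨y, hy, hxy⟩ := h x hx
  linarith [le_csSup ht (mem_image_of_mem f hy)]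

theorem finite_setOf_exists_le_and_eq_natCast_mul (n : ℕ) (ε : ℝ) :
    {x : ℝ | ∃ k : ℕ, k ≤ n ∧ x = (k : ℝ) * ε}.Finite := by
  refine ((finite_Iic n).image fun k : ℕ => (k : ℝ) * ε).subset ?_
  rintro x ⟨k, hk, rfl⟩
  exact ⟨k, hk, rfl⟩

theorem linear_contract_discretization_error_general
    {A : Type*}
    (V c : A → ℝ) (astar : ℝ → A)
    (hV : ∀ a, V a ∈ Set.Icc (0:ℝ) 1)
    (hbr : ∀ (α : ℝ) (a : A), α * V a - c a ≤ α * V (astar α) - c (astar α))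
    (u : ℝ → ℝ) (hu : ∀ α, u α = (1 - α) * V (astar α))
    (ε : ℝ) (hε : 0 < ε) (n : ℕ) (hnε : (n : ℝ) * ε = 1) :
    sSup (u '' Set.Icc 0 1) -
      sSup (u '' {x : ℝ | ∃ k : ℕ, k ≤ n ∧ x = (k : ℝ) * ε}) ≤ ε := by
  have hmono := monotone_bestResponse_value V c astar hbr
  have hgrid := finite_setOf_exists_le_and_eq_natCast_mul n ε
  suffices sSup (u '' Icc 0 1) ≤ sSup (u '' {x : ℝ | ∃ k : ℕ, k ≤ n ∧ x = (k : ℝ) * ε}) + ε by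
    linarith
  refine csSup_image_le_csSup_image_add (nonempty_Icc.mpr zero_le_one)
    (hgrid.image u).bddAbove fun α hα => ?_
  obtain ⟨k, hkn, hαk, hkα⟩ := exists_grid_point_mem_Icc hε hnε hα
  refine ⟨k * ε, ⟨k, hkn, rfl⟩, ?_⟩
  linarith [sub_le_of_monotone_of_le_one hmono (fun β => (hV (astar β)).2) hu hαk hα.2]

/-- In the linear contract setting, the discretization error of the uniform
grid {0, ε, 2ε, ..., 1} is at most ε:
sup_{α∈[0,1]} u(α) − sup_{α∈{0,ε,...,1}} u(α) ≤ ε, where 1/ε = n is an integer. -/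
theorem linear_contract_discretization_error
    {A : Type*} [Nonempty A]
    (V c : A → ℝ) (astar : ℝ → A)
    (hV : ∀ a, V a ∈ Set.Icc (0:ℝ) 1) (hc : ∀ a, 0 ≤ c a)
    (hbr : ∀ (α : ℝ) (a : A), α * V a - c a ≤ α * V (astar α) - c (astar α))
    (u : ℝ → ℝ) (hu : ∀ α, u α = (1 - α) * V (astar α))
    (ε : ℝ) (hε : 0 < ε) (n : ℕ) (hn : 0 < n) (hnε : (n : ℝ) * ε = 1) :
    sSup (u '' Set.Icc 0 1) -
      sSup (u '' {x : ℝ | ∃ k : ℕ, k ≤ n ∧ x = (k : ℝ) * ε}) ≤ ε :=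
  linear_contract_discretization_error_general V c astar hV hbr u hu ε hε n hnε
end

section
/- Suppose every pair of distinct actions is comparable under first-order stochastic dominance, and let γ ∈ [0,1]^m be strictly increasing in coordinates (γ_i < γ_j for i < j with γ_i ≥ 0). Then for any contract f, the best response a*(f+γ) first-order stochastically dominates a*(f): P(X ≥ o | a*(f)) ≤ P(X ≥ o | a*(f+γ)) for all outcomes o. -/
open Finset

lemma range_eq_image_filter_le {m : ℕ} (x : Fin m) :
    Finset.range (x.val + 1) = (univ.filter (fun j : Fin m => j ≤ x)).image Fin.val := by
  ext k
  simp only [Finset.mem_range, Finset.mem_image, Finset.mem_filter, Finset.mem_univ, true_and,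
    Nat.lt_succ_iff]
  constructor
  · intro hk
    exact ⟨⟨k, lt_of_le_of_lt hk x.isLt⟩, by simpa [Fin.le_def] using hk, rfl⟩
  · rintro ⟨j, hj, rfl⟩
    exact hj

lemma telescope_filter {m : ℕ} (x : Fin m) (G : ℕ → ℝ) :
    ∑ j ∈ univ.filter (fun j : Fin m => j ≤ x), (G (j.val + 1) - G j.val)
      = G (x.val + 1) - G 0 := by
  have h1 : ∑ k ∈ Finset.range (x.val + 1), (G (k + 1) - G k) = G (x.val + 1) - G 0 :=
    Finset.sum_range_sub (fun k => G k) (x.val + 1)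
  rw [← h1, range_eq_image_filter_le x,
    Finset.sum_image (fun a _ b _ h => Fin.val_injective h)]

lemma abel_sum {m : ℕ} (q γ : Fin m → ℝ) (G : ℕ → ℝ) (hG0 : G 0 = 0)
    (hG : ∀ j : Fin m, G (j.val + 1) = γ j) :
    ∑ x, q x * γ x
      = ∑ j : Fin m, (G (j.val + 1) - G j.val) * ∑ x ∈ univ.filter (fun x => j ≤ x), q x := by
  have h : ∀ j : Fin m, (G (j.val + 1) - G j.val) * ∑ x ∈ univ.filter (fun x => j ≤ x), q x
      = ∑ x, (if j ≤ x then (G (j.val + 1) - G j.val) * q x else 0) := by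
    intro j; rw [Finset.mul_sum, Finset.sum_filter]
  simp_rw [h]
  rw [Finset.sum_comm]
  refine Finset.sum_congr rfl (fun x _ => ?_)
  have h2 : ∑ j : Fin m, (if j ≤ x then (G (j.val + 1) - G j.val) * q x else 0)
      = ∑ j ∈ univ.filter (fun j : Fin m => j ≤ x), (G (j.val + 1) - G j.val) * q x := by
    rw [Finset.sum_filter]
  rw [h2, ← Finset.sum_mul, telescope_filter, hG0, sub_zero, hG, mul_comm]

/-- If every pair of distinct actions is FOSD-comparable and γ ∈ [0,1]^m has
strictly increasing nonnegative coordinates, then a*(f+γ) first-order stochastically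
dominates a*(f): P(X ≥ o | a*(f)) ≤ P(X ≥ o | a*(f+γ)) for all o. -/
theorem fosd_best_response_monotone
    {m : ℕ} {A : Type*} [Nonempty A]
    (p : A → Fin m → ℝ) (c : A → ℝ) (astar : (Fin m → ℝ) → A)
    (hp : ∀ a o, 0 ≤ p a o) (hp1 : ∀ a, ∑ o, p a o = 1)
    (hbr : ∀ (f : Fin m → ℝ) (a : A),
      ∑ o, p a o * f o - c a ≤ ∑ o, p (astar f) o * f o - c (astar f))
    (hfosd : ∀ a a' : A, a ≠ a' →
      (∀ o : Fin m, ∑ o' ∈ univ.filter (fun o' => o ≤ o'), p a' o' ≤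
          ∑ o' ∈ univ.filter (fun o' => o ≤ o'), p a o') ∨
      (∀ o : Fin m, ∑ o' ∈ univ.filter (fun o' => o ≤ o'), p a o' ≤
          ∑ o' ∈ univ.filter (fun o' => o ≤ o'), p a' o'))
    (f γ : Fin m → ℝ)
    (hf : ∀ o, f o ∈ Set.Icc (0:ℝ) 1)
    (hγmem : ∀ o, γ o ∈ Set.Icc (0:ℝ) 1)
    (hγ0 : ∀ o, 0 ≤ γ o) (hγmono : StrictMono γ) :
    ∀ o : Fin m, ∑ o' ∈ univ.filter (fun o' => o ≤ o'), p (astar f) o' ≤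
      ∑ o' ∈ univ.filter (fun o' => o ≤ o'), p (astar (f + γ)) o' := by
  set a := astar f with ha
  set b := astar (f + γ) with hb
  by_cases hab : a = b
  · intro o; rw [hab]
  have hsum : ∀ (a' : A), ∑ x, p a' x * (f x + γ x)
      = ∑ x, p a' x * f x + ∑ x, p a' x * γ x := by
    intro a'
    rw [← Finset.sum_add_distrib]
    exact Finset.sum_congr rfl (fun x _ => mul_add _ _ _)
  have h1 := hbr f b
  have h2 := hbr (f + γ) a
  simp only [Pi.add_apply] at h2
  rw [hsum a, hsum b] at h2
  have key : 0 ≤ ∑ x, (p b x - p a x) * γ x := by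
    have e : ∑ x, (p b x - p a x) * γ x = ∑ x, p b x * γ x - ∑ x, p a x * γ x := by
      rw [← Finset.sum_sub_distrib]
      exact Finset.sum_congr rfl (fun x _ => sub_mul _ _ _)
    rw [e]; linarith
  rcases hfosd a b hab with hd | hd
  swap
  · exact hd
  intro o
  set G : ℕ → ℝ := fun k => if h : k - 1 < m ∧ k ≠ 0 then γ ⟨k - 1, h.1⟩ else 0 with hGdef
  have hG0 : G 0 = 0 := by simp [hGdef]
  have hG : ∀ j : Fin m, G (j.val + 1) = γ j := by
    intro j
    simp [hGdef, j.isLt]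
  have hGpred : ∀ j : Fin m, 0 < j.val →
      G j.val = γ ⟨j.val - 1, lt_of_le_of_lt (Nat.sub_le _ _) j.isLt⟩ := by
    intro j hpos
    have hne : j.val ≠ 0 := Nat.pos_iff_ne_zero.mp hpos
    simp [hGdef, lt_of_le_of_lt (Nat.sub_le _ _) j.isLt, hne]
  have hd_nonneg : ∀ j : Fin m, 0 ≤ G (j.val + 1) - G j.val := by
    intro j
    rcases Nat.eq_zero_or_pos j.val with h0 | hpos
    · have hGj : G j.val = 0 := by rw [h0]; exact hG0
      rw [hG j, hGj, sub_zero]; exact hγ0 j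
    · rw [hG j, hGpred j hpos, sub_nonneg]
      exact hγmono.monotone (by simp [Fin.le_def])
  rw [abel_sum (fun x => p b x - p a x) γ G hG0 hG] at key
  have hterm : ∀ j ∈ (univ : Finset (Fin m)),
      (G (j.val + 1) - G j.val) * (∑ x ∈ univ.filter (fun x => j ≤ x), (p b x - p a x)) ≤ 0 := by
    intro j _
    have hT : ∑ x ∈ univ.filter (fun x : Fin m => j ≤ x), (p b x - p a x)
        = (∑ x ∈ univ.filter (fun x : Fin m => j ≤ x), p b x)
          - ∑ x ∈ univ.filter (fun x : Fin m => j ≤ x), p a x := Finset.sum_sub_distrib _ _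
    have := hd j
    exact mul_nonpos_of_nonneg_of_nonpos (hd_nonneg j) (by rw [hT]; linarith)
  have hsum0 : ∑ j : Fin m,
      (G (j.val + 1) - G j.val) * (∑ x ∈ univ.filter (fun x => j ≤ x), (p b x - p a x)) = 0 :=
    le_antisymm (Finset.sum_nonpos hterm) key
  have hzero := (Finset.sum_eq_zero_iff_of_nonpos hterm).mp hsum0
  rcases Nat.eq_zero_or_pos o.val with h0 | hpos
  · have huniv : univ.filter (fun x : Fin m => o ≤ x) = univ := by
      apply Finset.filter_true_of_mem
      intro x _
      rw [Fin.le_def, h0]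
      exact Nat.zero_le _
    rw [huniv, hp1, hp1]
  · have hterm0 := hzero o (Finset.mem_univ o)
    have hdpos : 0 < G (o.val + 1) - G o.val := by
      rw [hG o, hGpred o hpos, sub_pos]
      exact hγmono (by simp [Fin.lt_def]; omega)
    have hT0 : ∑ x ∈ univ.filter (fun x : Fin m => o ≤ x), (p b x - p a x) = 0 := by
      rcases mul_eq_zero.mp hterm0 with h | h
      · exact absurd h (ne_of_gt hdpos)
      · exact h
    rw [Finset.sum_sub_distrib] at hT0
    linarith
end

section
/- Under the FOSD assumption, if v − f* is non-decreasing in outcomes (i.e., v_i − f*_i ≤ v_j − f*_j for i ≤ j) and γ has strictly increasing nonnegative coordinates, then u(f*) − u(f* + γ) ≤ ‖γ‖_∞, where u(f) = Σ_o p(o|a*(f))·(v_o − f_o). -/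
/-!
Let `a = a*(f*)` and `a' = a*(f* + γ)`. Adding the agent's optimality conditions at `f*` and at
`f* + γ` gives `E_a[γ] ≤ E_a'[γ]`. As `γ` is strictly increasing, this excludes that `a` strictly
dominates `a'`; by the FOSD assumption `a'` therefore dominates `a`, so the non-decreasing share
`v − f*` has at least the same expectation under `a'`. Hence
`u(f*) − u(f* + γ) ≤ E_a'[γ] ≤ ‖γ‖_∞`.

Dominance enters through summation by parts, carried out by induction that peels off the least
outcome `a`: `∑ d·g = g a · ∑ d + ∑_{o > a} d o · (g o − g a)`, where `∑ d` is the tail at `a`.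
-/

open Finset

lemma sum_insert_mul_eq_mul_sum_add_sum_mul_sub {ι R : Type*} [DecidableEq ι] [CommRing R]
    {s : Finset ι} {a : ι} (ha : a ∉ s) (d g : ι → R) :
    ∑ o ∈ insert a s, d o * g o = g a * ∑ o ∈ insert a s, d o + ∑ o ∈ s, d o * (g o - g a) := by
  simp only [sum_insert ha, mul_sub, sum_sub_distrib, ← sum_mul]
  ring

section TailSums

variable {α M : Type*} [LinearOrder α] [AddCommMonoid M] (s : Finset α) (d : α → M) {a : α}

lemma sum_filter_le_insert_of_lt {k : α} (hak : a < k) :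
    ∑ o ∈ insert a s with k ≤ o, d o = ∑ o ∈ s with k ≤ o, d o := by
  rw [filter_insert, if_neg (not_le.2 hak)]

lemma sum_filter_le_insert_of_forall_lt (has : ∀ x ∈ s, a < x) :
    ∑ o ∈ insert a s with a ≤ o, d o = ∑ o ∈ insert a s, d o := by
  rw [filter_true_of_mem]
  simp only [mem_insert, forall_eq_or_imp, le_refl, true_and]
  exact fun x hx => (has x hx).le

end TailSums

section AbelSummation

variable {α R : Type*} [LinearOrder α] [CommRing R] [LinearOrder R] [IsStrictOrderedRing R]
  {s : Finset α} {d g : α → R}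

lemma sum_mul_nonneg_of_tail_nonneg (hg : MonotoneOn g s) (hg₀ : ∀ o ∈ s, 0 ≤ g o)
    (hd : ∀ k ∈ s, 0 ≤ ∑ o ∈ s with k ≤ o, d o) : 0 ≤ ∑ o ∈ s, d o * g o := by
  induction s using Finset.induction_on_min generalizing g with
  | empty => simp
  | insert a s has ih =>
    have ha : a ∈ insert a s := mem_insert_self a s
    rw [sum_insert_mul_eq_mul_sum_add_sum_mul_sub (fun h => lt_irrefl a (has a h))]
    refine add_nonneg (mul_nonneg (hg₀ a ha) ?_) (ih ?_ ?_ ?_)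
    · simpa only [sum_filter_le_insert_of_forall_lt s d has] using hd a ha
    · exact fun x hx y hy hxy =>
        sub_le_sub_right (hg (mem_insert_of_mem hx) (mem_insert_of_mem hy) hxy) _
    · exact fun x hx => sub_nonneg.2 (hg ha (mem_insert_of_mem hx) (has x hx).le)
    · intro k hk
      simpa only [sum_filter_le_insert_of_lt s d (has k hk)] using hd k (mem_insert_of_mem hk)

lemma sum_filter_le_eq_zero_of_sum_mul_eq_zero (hg : StrictMonoOn g s) (hg₀ : ∀ o ∈ s, 0 ≤ g o)
    (hd : ∀ k ∈ s, 0 ≤ ∑ o ∈ s with k ≤ o, d o) (h : ∑ o ∈ s, d o * g o = 0) {k : α} (hk : k ∈ s)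
    (hgk : 0 < g k) : ∑ o ∈ s with k ≤ o, d o = 0 := by
  induction s using Finset.induction_on_min generalizing g with
  | empty => simp at hk
  | insert a s has ih =>
    have ha : a ∈ insert a s := mem_insert_self a s
    have hg' : StrictMonoOn (fun o => g o - g a) s := fun x hx y hy hxy =>
      sub_lt_sub_right (hg (mem_insert_of_mem hx) (mem_insert_of_mem hy) hxy) _
    have hg₀' : ∀ o ∈ s, 0 ≤ g o - g a := fun x hx =>
      sub_nonneg.2 (hg ha (mem_insert_of_mem hx) (has x hx)).le
    have hd' : ∀ k ∈ s, 0 ≤ ∑ o ∈ s with k ≤ o, d o := fun k hk => by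
      simpa only [sum_filter_le_insert_of_lt s d (has k hk)] using hd k (mem_insert_of_mem hk)
    have htot : 0 ≤ ∑ o ∈ insert a s, d o := by
      simpa only [sum_filter_le_insert_of_forall_lt s d has] using hd a ha
    rw [sum_insert_mul_eq_mul_sum_add_sum_mul_sub (fun h => lt_irrefl a (has a h))] at h
    obtain ⟨hhead, hrest⟩ := (add_eq_zero_iff_of_nonneg (mul_nonneg (hg₀ a ha) htot)
      (sum_mul_nonneg_of_tail_nonneg hg'.monotoneOn hg₀' hd')).1 h
    rcases mem_insert.1 hk with rfl | hk
    · rw [sum_filter_le_insert_of_forall_lt s d has]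
      exact (mul_eq_zero.1 hhead).resolve_left hgk.ne'
    · rw [sum_filter_le_insert_of_lt s d (has k hk)]
      exact ih hg' hg₀' hd' hrest hk (sub_pos.2 (hg ha (mem_insert_of_mem hk) (has k hk)))

end AbelSummation

lemma sum_sub_mul_sub_const {ι R : Type*} [CommRing R] {s : Finset ι} {p q : ι → R}
    (hpq : ∑ o ∈ s, p o = ∑ o ∈ s, q o) (g : ι → R) (c : R) :
    ∑ o ∈ s, (q o - p o) * (g o - c) = ∑ o ∈ s, q o * g o - ∑ o ∈ s, p o * g o := by
  simp only [sub_mul, mul_sub, sum_sub_distrib, ← sum_mul, hpq]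
  ring

section StochasticDominance

variable {α R : Type*} [Fintype α] [LinearOrder α] [CommRing R] [LinearOrder R]
  [IsStrictOrderedRing R] {p q g : α → R}

/-- `FOSDLe p q`: `q` first-order stochastically dominates `p`. -/
def FOSDLe (p q : α → R) : Prop :=
  ∀ k, ∑ o with k ≤ o, p o ≤ ∑ o with k ≤ o, q o

theorem FOSDLe.sum_mul_le (h : FOSDLe p q) (hpq : ∑ o, p o = ∑ o, q o) (hg : Monotone g) :
    ∑ o, p o * g o ≤ ∑ o, q o * g o := by
  cases isEmpty_or_nonempty α
  · simp
  obtain ⟨x, hx⟩ := Finite.exists_min g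
  rw [← sub_nonneg, ← sum_sub_mul_sub_const hpq g (g x)]
  refine sum_mul_nonneg_of_tail_nonneg (fun a _ b _ hab => sub_le_sub_right (hg hab) _)
    (fun o _ => sub_nonneg.2 (hx o)) fun k _ => ?_
  simpa only [sum_sub_distrib, sub_nonneg] using h k

theorem FOSDLe.symm_of_sum_mul_le (h : FOSDLe q p) (hpq : ∑ o, p o = ∑ o, q o) (hg : StrictMono g)
    (hle : ∑ o, p o * g o ≤ ∑ o, q o * g o) : FOSDLe p q := by
  cases isEmpty_or_nonempty α
  · exact fun k => isEmptyElim k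
  obtain ⟨x, hx⟩ := Finite.exists_min g
  have htail : ∀ k ∈ univ, 0 ≤ ∑ o with k ≤ o, (p o - q o) := fun k _ => by
    simpa only [sum_sub_distrib, sub_nonneg] using h k
  have hzero : ∑ o, (p o - q o) * (g o - g x) = 0 := by
    rw [sum_sub_mul_sub_const hpq.symm g (g x)]
    exact le_antisymm (sub_nonpos.2 hle) (sub_nonneg.2 (h.sum_mul_le hpq.symm hg.monotone))
  intro k
  rcases (hx k).lt_or_eq with hxk | hxk
  · have := sum_filter_le_eq_zero_of_sum_mul_eq_zero
      (fun a _ b _ hab => sub_lt_sub_right (hg hab) (g x)) (fun o _ => sub_nonneg.2 (hx o)) htail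
      hzero (mem_univ k) (sub_pos.2 hxk)
    rw [sum_sub_distrib, sub_eq_zero] at this
    exact this.le
  · rw [filter_true_of_mem fun o _ => hg.le_iff_le.1 (hxk ▸ hx o)]
    exact hpq.le

end StochasticDominance

lemma sum_mul_le_sum_mul_bestResponse_add {A ι R : Type*} [Fintype ι] [CommRing R]
    [LinearOrder R] [IsStrictOrderedRing R] (p : A → ι → R) (c : A → R) (astar : (ι → R) → A)
    (hbr : ∀ (f : ι → R) (a : A),
      ∑ o, p a o * f o - c a ≤ ∑ o, p (astar f) o * f o - c (astar f)) (f γ : ι → R) :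
    ∑ o, p (astar f) o * γ o ≤ ∑ o, p (astar (f + γ)) o * γ o := by
  have h₁ := hbr (f + γ) (astar f)
  have h₂ := hbr f (astar (f + γ))
  simp only [Pi.add_apply, mul_add, sum_add_distrib] at h₁
  linarith

lemma sum_mul_le_norm {ι : Type*} [Fintype ι] {p : ι → ℝ} (hp : ∀ o, 0 ≤ p o)
    (hp1 : ∑ o, p o = 1) (γ : ι → ℝ) : ∑ o, p o * γ o ≤ ‖γ‖ :=
  calc ∑ o, p o * γ o ≤ ∑ o, p o * ‖γ‖ :=
        sum_le_sum fun o _ =>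
          mul_le_mul_of_nonneg_left ((Real.le_norm_self _).trans (norm_le_pi_norm γ o)) (hp o)
    _ = ‖γ‖ := by rw [← sum_mul, hp1, one_mul]

theorem fosd_utility_continuity_general
    {m : ℕ} {A : Type*}
    (p : A → Fin m → ℝ) (c : A → ℝ) (astar : (Fin m → ℝ) → A)
    (hp : ∀ a o, 0 ≤ p a o) (hp1 : ∀ a, ∑ o, p a o = 1)
    (hbr : ∀ (f : Fin m → ℝ) (a : A),
      ∑ o, p a o * f o - c a ≤ ∑ o, p (astar f) o * f o - c (astar f))
    (hfosd : ∀ a a' : A, a ≠ a' →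
      (∀ o : Fin m, ∑ o' ∈ univ.filter (fun o' => o ≤ o'), p a' o' ≤
          ∑ o' ∈ univ.filter (fun o' => o ≤ o'), p a o') ∨
      (∀ o : Fin m, ∑ o' ∈ univ.filter (fun o' => o ≤ o'), p a o' ≤
          ∑ o' ∈ univ.filter (fun o' => o ≤ o'), p a' o'))
    (v : Fin m → ℝ)
    (u : (Fin m → ℝ) → ℝ)
    (hu : ∀ f, u f = ∑ o, p (astar f) o * (v o - f o))
    (fstar γ : Fin m → ℝ)
    (hmono : Monotone (fun o => v o - fstar o))
    (hγmono : StrictMono γ) :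
    u fstar - u (fstar + γ) ≤ ‖γ‖ := by
  set a := astar fstar
  set a' := astar (fstar + γ)
  have htot : ∑ o, p a o = ∑ o, p a' o := (hp1 a).trans (hp1 a').symm
  have hγ : ∑ o, p a o * γ o ≤ ∑ o, p a' o * γ o :=
    sum_mul_le_sum_mul_bestResponse_add p c astar hbr fstar γ
  have hdom : FOSDLe (p a) (p a') := by
    rcases eq_or_ne a a' with heq | hne
    · exact fun k => heq ▸ le_rfl
    rcases hfosd a a' hne with h | h
    · exact FOSDLe.symm_of_sum_mul_le h htot hγmono hγ
    · exact h
  have hshare : ∑ o, p a o * (v o - fstar o) ≤ ∑ o, p a' o * (v o - fstar o) :=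
    hdom.sum_mul_le htot hmono
  have hpay : ∑ o, p a' o * γ o ≤ ‖γ‖ := sum_mul_le_norm (hp a') (hp1 a') γ
  simp only [hu, Pi.add_apply, sub_add_eq_sub_sub, mul_sub, sum_sub_distrib] at hshare ⊢
  linarith

/-- Under the FOSD assumption, if v − f* is non-decreasing in outcomes and
γ has strictly increasing nonnegative coordinates, then u(f*) − u(f*+γ) ≤ ‖γ‖_∞,
where u(f) = ∑_o p(o|a*(f))·(v_o − f_o). -/
theorem fosd_utility_continuity
    {m : ℕ} {A : Type*} [Nonempty A]
    (p : A → Fin m → ℝ) (c : A → ℝ) (astar : (Fin m → ℝ) → A)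
    (hp : ∀ a o, 0 ≤ p a o) (hp1 : ∀ a, ∑ o, p a o = 1)
    (hbr : ∀ (f : Fin m → ℝ) (a : A),
      ∑ o, p a o * f o - c a ≤ ∑ o, p (astar f) o * f o - c (astar f))
    (hfosd : ∀ a a' : A, a ≠ a' →
      (∀ o : Fin m, ∑ o' ∈ univ.filter (fun o' => o ≤ o'), p a' o' ≤
          ∑ o' ∈ univ.filter (fun o' => o ≤ o'), p a o') ∨
      (∀ o : Fin m, ∑ o' ∈ univ.filter (fun o' => o ≤ o'), p a o' ≤
          ∑ o' ∈ univ.filter (fun o' => o ≤ o'), p a' o'))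
    (v : Fin m → ℝ) (hv : ∀ o, v o ∈ Set.Icc (0:ℝ) 1)
    (u : (Fin m → ℝ) → ℝ)
    (hu : ∀ f, u f = ∑ o, p (astar f) o * (v o - f o))
    (fstar γ : Fin m → ℝ)
    (hfstar : ∀ o, fstar o ∈ Set.Icc (0:ℝ) 1)
    (hmono : Monotone (fun o => v o - fstar o))
    (hγ0 : ∀ o, 0 ≤ γ o) (hγmono : StrictMono γ) :
    u fstar - u (fstar + γ) ≤ ‖γ‖ :=
  fosd_utility_continuity_general p c astar hp hp1 hbr hfosd v u hu fstar γ hmono hγmono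
end

section
/- In the lower-bound construction, for the probability vector p(k) = (1 − 1/(2(1−kε)), 1/(2(1−kε))) and cost c(k) = (1/2)(kε/(1−kε) − Σ_{j=0}^{k−1} ε/(1−jε)), the agent facing linear contract α chooses action a(k) (over all a(k'), k' in {0,...,⌊1/(2ε)⌋−1}) if and only if kε ≤ α < (k+1)ε (or kε ≤ α for the largest k). -/
/-! The payoff increment from action `j` to `j + 1` is a positive multiple of `α - (j + 1) ε`.
So, as a function of the action index, the payoff rises weakly while `(j + 1) ε ≤ α` and falls
strictly afterwards; the largest maximiser is therefore the last `k` with `k ε ≤ α`. -/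

open Set

theorem eq_of_greatestArgmax_of_unimodal {β : Type*} [LinearOrder β] {f : ℕ → β} {K a k : ℕ}
    (ha : a < K) (hmax : ∀ i < K, f i ≤ f a) (htie : ∀ i < K, f i = f a → i ≤ a) (hk : k < K)
    (hmono : MonotoneOn f (Iic k)) (hanti : StrictAntiOn f (Ico k K)) : a = k := by
  rcases lt_trichotomy a k with hak | rfl | hka
  · have : f a ≤ f k := hmono (mem_Iic.mpr hak.le) self_mem_Iic hak.le
    have := htie k hk (le_antisymm (hmax k hk) this)
    omega
  · rfl
  · have := hanti ⟨le_rfl, hk⟩ ⟨hka.le, ha⟩ hka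
    exact absurd (hmax k hk) (not_le.mpr this)

noncomputable def agentPayoff (ε : ℝ) (k : ℕ) (α : ℝ) : ℝ :=
  α / (2 * (1 - k * ε)) -
    (1 / 2) * (k * ε / (1 - k * ε) - ∑ j ∈ Finset.range k, ε / (1 - j * ε))

section agentPayoff

variable {ε α : ℝ}

theorem natCast_mul_lt_one_of_lt (hε : 0 < ε) {j K : ℕ} (hK : (K : ℝ) * ε ≤ 1) (hj : j < K) :
    (j : ℝ) * ε < 1 := by
  have : (j : ℝ) * ε < K * ε := by gcongr
  linarith

theorem agentPayoff_succ_sub (hε : 0 ≤ ε) {j : ℕ} (hj : ((j : ℝ) + 1) * ε < 1) :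
    agentPayoff ε (j + 1) α - agentPayoff ε j α =
      ε * (α - ((j : ℝ) + 1) * ε) / (2 * (1 - ((j : ℝ) + 1) * ε) * (1 - j * ε)) := by
  have h₁ : 1 - ((j : ℝ) + 1) * ε ≠ 0 := by linarith
  have h₂ : 1 - (j : ℝ) * ε ≠ 0 := by nlinarith
  rw [agentPayoff, agentPayoff, Finset.sum_range_succ]
  push_cast
  field_simp
  ring

theorem agentPayoff_succ_sub_denom_pos (hε : 0 ≤ ε) {j : ℕ} (hj : ((j : ℝ) + 1) * ε < 1) :
    0 < 2 * (1 - ((j : ℝ) + 1) * ε) * (1 - j * ε) := by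
  have : (j : ℝ) * ε < 1 := by nlinarith
  have : 0 < 1 - ((j : ℝ) + 1) * ε := by linarith
  positivity

theorem agentPayoff_le_succ (hε : 0 ≤ ε) {j : ℕ} (hj : ((j : ℝ) + 1) * ε < 1)
    (hα : ((j : ℝ) + 1) * ε ≤ α) : agentPayoff ε j α ≤ agentPayoff ε (j + 1) α := by
  have h := agentPayoff_succ_sub (α := α) hε hj
  have : 0 ≤ agentPayoff ε (j + 1) α - agentPayoff ε j α :=
    h ▸ div_nonneg (mul_nonneg hε (by linarith)) (agentPayoff_succ_sub_denom_pos hε hj).le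
  linarith

theorem agentPayoff_succ_lt (hε : 0 < ε) {j : ℕ} (hj : ((j : ℝ) + 1) * ε < 1)
    (hα : α < ((j : ℝ) + 1) * ε) : agentPayoff ε (j + 1) α < agentPayoff ε j α := by
  have h := agentPayoff_succ_sub (α := α) hε.le hj
  have : agentPayoff ε (j + 1) α - agentPayoff ε j α < 0 :=
    h ▸ div_neg_of_neg_of_pos (mul_neg_of_pos_of_neg hε (by linarith))
      (agentPayoff_succ_sub_denom_pos hε.le hj)
  linarith

theorem agentPayoff_monotoneOn (hε : 0 ≤ ε) {k : ℕ} (hk : (k : ℝ) * ε < 1)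
    (hα : (k : ℝ) * ε ≤ α) : MonotoneOn (fun j => agentPayoff ε j α) (Iic k) := by
  refine monotoneOn_of_le_add_one ordConnected_Iic fun j _ _ hj => ?_
  have : ((j : ℝ) + 1) * ε ≤ k * ε := by
    gcongr
    exact_mod_cast hj
  exact agentPayoff_le_succ hε (by linarith) (by linarith)

theorem agentPayoff_strictAntiOn (hε : 0 < ε) {k K : ℕ} (hK : (K : ℝ) * ε ≤ 1)
    (hα : k + 1 < K → α < ((k : ℝ) + 1) * ε) :
    StrictAntiOn (fun j => agentPayoff ε j α) (Ico k K) := by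
  refine strictAntiOn_of_add_one_lt ordConnected_Ico fun j _ hj hj' => ?_
  have hkj : ((k : ℝ) + 1) * ε ≤ (j + 1) * ε := by
    gcongr
    exact_mod_cast hj.1
  have := natCast_mul_lt_one_of_lt hε hK hj'.2
  push_cast at this
  exact agentPayoff_succ_lt hε this (by linarith [hα ((Nat.add_le_add_right hj.1 1).trans_lt hj'.2)])

theorem agentPayoff_threshold_of_greatestArgmax (hε : 0 < ε) (hα : 0 ≤ α) {k K : ℕ}
    (hK : (K : ℝ) * ε ≤ 1) (hk : k < K) (hmax : ∀ i < K, agentPayoff ε i α ≤ agentPayoff ε k α)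
    (htie : ∀ i < K, agentPayoff ε i α = agentPayoff ε k α → i ≤ k) :
    (k : ℝ) * ε ≤ α ∧ (k + 1 < K → α < ((k : ℝ) + 1) * ε) := by
  refine ⟨?_, fun hk₁ => ?_⟩
  · cases k with
    | zero => simpa using hα
    | succ m =>
      by_contra! hlt
      have hm := natCast_mul_lt_one_of_lt hε hK hk
      push_cast at hlt hm
      exact (agentPayoff_succ_lt hε hm hlt).not_ge (hmax m (by omega))
  · by_contra! hle
    have hk₁ε := natCast_mul_lt_one_of_lt hε hK hk₁
    push_cast at hk₁ε
    have := htie _ hk₁ (le_antisymm (hmax _ hk₁) (agentPayoff_le_succ hε.le hk₁ε hle))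
    omega

end agentPayoff

theorem lower_bound_best_response_intervals_general
    (ε : ℝ) (hε0 : 0 < ε)
    (K : ℕ) (hK : K = Nat.floor (1 / (2 * ε)))
    (cost : ℕ → ℝ)
    (hcost : ∀ k : ℕ, cost k =
      (1/2) * (((k : ℝ) * ε) / (1 - (k : ℝ) * ε) -
        ∑ j ∈ Finset.range k, ε / (1 - (j : ℝ) * ε)))
    (g : ℕ → ℝ → ℝ)
    (hg : ∀ (k : ℕ) (α : ℝ), g k α = α / (2 * (1 - (k : ℝ) * ε)) - cost k)
    (astar : ℝ → ℕ)
    (hastar_lt : ∀ α : ℝ, astar α < K)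
    (hastar_max : ∀ α : ℝ, ∀ k' < K, g k' α ≤ g (astar α) α)
    (hastar_tie : ∀ α : ℝ, ∀ k' < K, g k' α = g (astar α) α → k' ≤ astar α) :
    ∀ α ∈ Set.Icc (0:ℝ) 1, ∀ k < K,
      (astar α = k ↔
        ((k : ℝ) * ε ≤ α ∧ (k + 1 < K → α < ((k : ℝ) + 1) * ε))) := by
  obtain rfl : g = agentPayoff ε := by
    funext k α
    rw [hg, hcost]
    rfl
  have hKε : (K : ℝ) * ε ≤ 1 := by
    have : (K : ℝ) ≤ 1 / (2 * ε) := hK ▸ Nat.floor_le (by positivity)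
    rw [le_div_iff₀ (by positivity)] at this
    linarith
  rintro α ⟨hα0, -⟩ k hk
  constructor
  · rintro rfl
    exact agentPayoff_threshold_of_greatestArgmax hε0 hα0 hKε hk (hastar_max α) (hastar_tie α)
  · rintro ⟨hkα, hαk⟩
    exact eq_of_greatestArgmax_of_unimodal (hastar_lt α) (hastar_max α) (hastar_tie α) hk
      (agentPayoff_monotoneOn hε0.le (natCast_mul_lt_one_of_lt hε0 hKε hk) hkα)
      (agentPayoff_strictAntiOn hε0 hKε hαk)

/-- In the lower-bound construction with
p(k) = (1 − 1/(2(1−kε)), 1/(2(1−kε))) and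
c(k) = (1/2)(kε/(1−kε) − ∑_{j<k} ε/(1−jε)), the agent facing linear contract α
(payoff g k α = α/(2(1−kε)) − c(k), ties broken toward larger index) chooses action a(k)
iff kε ≤ α < (k+1)ε (or kε ≤ α for the largest k < ⌊1/(2ε)⌋). -/
theorem lower_bound_best_response_intervals
    (ε : ℝ) (hε0 : 0 < ε) (hε : ε < 0.1)
    (K : ℕ) (hK : K = Nat.floor (1 / (2 * ε)))
    (cost : ℕ → ℝ)
    (hcost : ∀ k : ℕ, cost k =
      (1/2) * (((k : ℝ) * ε) / (1 - (k : ℝ) * ε) -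
        ∑ j ∈ Finset.range k, ε / (1 - (j : ℝ) * ε)))
    (g : ℕ → ℝ → ℝ)
    (hg : ∀ (k : ℕ) (α : ℝ), g k α = α / (2 * (1 - (k : ℝ) * ε)) - cost k)
    (astar : ℝ → ℕ)
    (hastar_lt : ∀ α : ℝ, astar α < K)
    (hastar_max : ∀ α : ℝ, ∀ k' < K, g k' α ≤ g (astar α) α)
    (hastar_tie : ∀ α : ℝ, ∀ k' < K, g k' α = g (astar α) α → k' ≤ astar α) :
    ∀ α ∈ Set.Icc (0:ℝ) 1, ∀ k < K,
      (astar α = k ↔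
        ((k : ℝ) * ε ≤ α ∧ (k + 1 < K → α < ((k : ℝ) + 1) * ε))) :=
  lower_bound_best_response_intervals_general ε hε0 K hK cost hcost g hg astar hastar_lt hastar_max
    hastar_tie
end
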